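/- arXiv:2501.00685 — 2 statements merged into one kernel-verified Lean document; each statement's English description precedes it below -/
import Mathlib

section
/- Let M ⊆ B(H) be a von Neumann algebra and V a quantum relation on M ⊆ B(H). Define φ_V : Proj(M) → Proj(M) by φ_V(q) = ⋁_{a∈V} s_ℓ^M(aq). Then orc(V) = V_{φ_V}, where V_{φ_V} = {a ∈ B(H) : s_ℓ^M(aq) ≤ φ_V(q) for all projections q ∈ M}. Consequently, a quantum relation V on M ⊆ B(H) is operator reflexive if and only if V = V_φ for some map φ : Proj(M) → Proj(M), where V_φ = {a ∈ B(H) : s_ℓ^M(aq) ≤ φ(q) for all projections q ∈ M}. -/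
/-! For a projection `q ∈ M`, the join `φ_V(q)` is the projection onto the closed span of `V q H`;
this subspace is `M'`-invariant, so the projection lies in `M'' = M`. A projection `p ∈ M`
satisfies `p V q = 0` exactly when `p φ_V(q) = 0`, so among the conditions defining `orc(V)` at
`q` the strongest is the one for `p = 1 - φ_V(q)`, and it says `s_ℓ(a q) ≤ φ_V(q)`. Conversely,
`V_φ` is cut out by the conditions `(1 - φ(q)) a q = 0`, each of which already appears in the
definition of `orc(V_φ)`, so `V_φ` is operator reflexive. -/

open scoped ENNReal NNReal

noncomputable section

universe u

namespace QCG

/-- The weak* (σ-weak) topology on `B(H)`: the topology induced by the functionals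
`x ↦ ∑' n, ⟪x (ξ n), η n⟫` indexed by pairs of square-summable sequences `ξ, η : ℕ → H`. -/
def sigmaWeak (H : Type u) [NormedAddCommGroup H] [InnerProductSpace ℂ H] :
    TopologicalSpace (H →L[ℂ] H) :=
  TopologicalSpace.induced
    (fun a (p : {xe : (ℕ → H) × (ℕ → H) //
        Summable (fun n => ‖xe.1 n‖ ^ 2) ∧ Summable (fun n => ‖xe.2 n‖ ^ 2)}) =>
      (∑' n, (inner ℂ (a (p.1.1 n)) (p.1.2 n) : ℂ)))
    inferInstance

variable {H : Type u} [NormedAddCommGroup H] [InnerProductSpace ℂ H] [CompleteSpace H]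

/-- A set of operators is weak*-closed. -/
def IsWeakStarClosed (V : Set (H →L[ℂ] H)) : Prop :=
  @IsClosed _ (sigmaWeak H) V

/-- The weak*-closure of a set of operators. -/
def wclosure (S : Set (H →L[ℂ] H)) : Set (H →L[ℂ] H) :=
  @closure _ (sigmaWeak H) S

/-- A quantum relation on `M ⊆ B(H)`: a weak*-closed linear subspace of `B(H)` which is a
bimodule over the commutant `M'`. -/
structure IsQRel (M : VonNeumannAlgebra H) (V : Set (H →L[ℂ] H)) : Prop where
  zero_mem : (0 : H →L[ℂ] H) ∈ V
  add_mem : ∀ a b : H →L[ℂ] H, a ∈ V → b ∈ V → a + b ∈ V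
  smul_mem : ∀ (c : ℂ) (a : H →L[ℂ] H), a ∈ V → c • a ∈ V
  weakStarClosed : IsWeakStarClosed V
  bimodule : ∀ x ∈ M.commutant, ∀ v ∈ V, ∀ y ∈ M.commutant, x * v * y ∈ V

/-- An (orthogonal) projection belonging to the von Neumann algebra `M`. -/
def IsProjectionIn (M : VonNeumannAlgebra H) (p : H →L[ℂ] H) : Prop :=
  p ∈ M ∧ IsIdempotentElem p ∧ IsSelfAdjoint p

/-- `s` is the left `M`-support `s_ℓ^M(a)` of `a`: the smallest projection `q ∈ M` with
`q * a = a`.  (For projections `s, p`, the inequality `s ≤ p` is expressed as `p * s = s`.) -/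
def IsLeftSupport (M : VonNeumannAlgebra H) (a s : H →L[ℂ] H) : Prop :=
  IsProjectionIn M s ∧ s * a = a ∧
    ∀ p : H →L[ℂ] H, IsProjectionIn M p → p * a = a → p * s = s

/-- `s` is the `M`-support `s^M(ξ)` of the vector `ξ`: the smallest projection `q ∈ M`
with `q ξ = ξ`. -/
def IsVectorSupport (M : VonNeumannAlgebra H) (ξ : H) (s : H →L[ℂ] H) : Prop :=
  IsProjectionIn M s ∧ s ξ = ξ ∧
    ∀ p : H →L[ℂ] H, IsProjectionIn M p → p ξ = ξ → p * s = s

/-- A quantum coarse structure on `M ⊆ B(H)`: a family of quantum relations containing the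
diagonal `M'` and closed under subrelations, adjoints, (weak*-closures of) sums, and
(weak*-closed spans of) products. -/
structure IsQCoarse (M : VonNeumannAlgebra H) (𝒱 : Set (Set (H →L[ℂ] H))) : Prop where
  qrel : ∀ V ∈ 𝒱, IsQRel M V
  diag_mem : (M.commutant : Set (H →L[ℂ] H)) ∈ 𝒱
  subrel_mem : ∀ V₁ ∈ 𝒱, ∀ V₂ : Set (H →L[ℂ] H), IsQRel M V₂ → V₂ ⊆ V₁ → V₂ ∈ 𝒱
  star_mem : ∀ V ∈ 𝒱, (star '' V) ∈ 𝒱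
  add_mem : ∀ V₁ ∈ 𝒱, ∀ V₂ ∈ 𝒱,
    wclosure {v : H →L[ℂ] H | ∃ a ∈ V₁, ∃ b ∈ V₂, v = a + b} ∈ 𝒱
  mul_mem : ∀ V₁ ∈ 𝒱, ∀ V₂ ∈ 𝒱,
    wclosure ((Submodule.span ℂ {v : H →L[ℂ] H | ∃ a ∈ V₁, ∃ b ∈ V₂, v = a * b} :
      Submodule ℂ (H →L[ℂ] H)) : Set (H →L[ℂ] H)) ∈ 𝒱

/-- `V_φ = {a ∈ B(H) : s_ℓ^M(a q) ≤ φ(q) for every projection q ∈ M}`. -/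
def Vphi (M : VonNeumannAlgebra H) (φ : (H →L[ℂ] H) → (H →L[ℂ] H)) : Set (H →L[ℂ] H) :=
  {a | ∀ q : H →L[ℂ] H, IsProjectionIn M q →
      ∀ s : H →L[ℂ] H, IsLeftSupport M (a * q) s → φ q * s = s}

/-- `s = φ_V(q) = ⋁_{a ∈ V} s_ℓ^M(a q)`, i.e. `s` is the smallest projection in `M` with
`s (a q) = a q` for every `a ∈ V`. -/
def IsJoinOfLeftSupports (M : VonNeumannAlgebra H) (V : Set (H →L[ℂ] H))
    (q s : H →L[ℂ] H) : Prop :=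
  IsProjectionIn M s ∧ (∀ a ∈ V, s * (a * q) = a * q) ∧
    ∀ r : H →L[ℂ] H, IsProjectionIn M r → (∀ a ∈ V, r * (a * q) = a * q) → r * s = s

/-- The operator reflexive closure of `V` (for an `M'`-bimodule it suffices to use
projections in `M`):
`orc(V) = {a : for all projections p, q ∈ M, p V q = {0} implies p a q = 0}`. -/
def orcSet (M : VonNeumannAlgebra H) (V : Set (H →L[ℂ] H)) : Set (H →L[ℂ] H) :=
  {a | ∀ p q : H →L[ℂ] H, IsProjectionIn M p → IsProjectionIn M q →
      (∀ v ∈ V, p * v * q = 0) → p * a * q = 0}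

/-- A closed subspace invariant under `M'` reduces `M'` (which is `*`-closed), so its projection
lies in `M'' = M`. -/
lemma starProjection_mem_of_mapsTo (M : VonNeumannAlgebra H) (K : Submodule ℂ H)
    [K.HasOrthogonalProjection] (hK : ∀ x ∈ M.commutant, Set.MapsTo x K K) :
    K.starProjection ∈ M := by
  rw [← VonNeumannAlgebra.commutant_commutant M, VonNeumannAlgebra.mem_commutant_iff]
  intro x hx
  have hinv : ∀ y ∈ M.commutant, K ∈ Module.End.invtSubmodule (y : H →ₗ[ℂ] H) := fun y hy =>
    (Module.End.mem_invtSubmodule_iff_forall_mem_of_mem _).2 (hK y hy)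
  refine (((ContinuousLinearMap.IsIdempotentElem.commute_iff
    K.isIdempotentElem_starProjection).2 ⟨?_, ?_⟩).eq).symm
  · rw [K.range_starProjection]
    exact hinv x hx
  · rw [K.ker_starProjection]
    refine ContinuousLinearMap.orthogonal_mem_invtSubmodule (hinv _ ?_)
    rw [← ContinuousLinearMap.star_eq_adjoint]
    exact star_mem hx

/-- Realised by the projection onto the closed span of `S`. -/
lemma exists_least_projection_fixing (M : VonNeumannAlgebra H) {S : Set H}
    (hS : ∀ x ∈ M.commutant, Set.MapsTo x S S) :
    ∃ s, IsProjectionIn M s ∧ (∀ y ∈ S, s y = y) ∧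
      ∀ r, IsProjectionIn M r → (∀ y ∈ S, r y = y) → r * s = s := by
  set K := (Submodule.span ℂ S).closure
  have hSK : S ⊆ K := fun y hy => subset_closure (Submodule.subset_span hy)
  refine ⟨(K : Submodule ℂ H).starProjection, ⟨?_, ?_, ?_⟩, ?_, ?_⟩
  · exact starProjection_mem_of_mapsTo M K fun x hx =>
      (Submodule.mapsTo_span (hS x hx)).closure x.continuous
  · exact Submodule.isIdempotentElem_starProjection _
  · exact isSelfAdjoint_starProjection _
  · exact fun y hy => Submodule.starProjection_eq_self_iff.2 (hSK hy)
  · intro r _ hr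
    ext ξ
    exact ContinuousLinearMap.eqOn_closure_span (g := 1) hr
      ((K : Submodule ℂ H).starProjection_apply_mem ξ)

lemma IsProjectionIn.one_sub {M : VonNeumannAlgebra H} {s : H →L[ℂ] H}
    (hs : IsProjectionIn M s) : IsProjectionIn M (1 - s) :=
  ⟨sub_mem (one_mem _) hs.1, hs.2.1.one_sub, (IsSelfAdjoint.one _).sub hs.2.2⟩

lemma IsQRel.mul_mem_left {M : VonNeumannAlgebra H} {V : Set (H →L[ℂ] H)} (hV : IsQRel M V)
    {x v : H →L[ℂ] H} (hx : x ∈ M.commutant) (hv : v ∈ V) : x * v ∈ V := by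
  simpa using hV.bimodule x hx v hv 1 (one_mem _)

/-- The left support of `b` is the least projection of `M` fixing the `M'`-invariant set
`M' (b H)`; a projection of `M` fixes it as soon as it fixes `b H`, since it commutes with `M'`. -/
lemma exists_isLeftSupport (M : VonNeumannAlgebra H) (b : H →L[ℂ] H) :
    ∃ t, IsLeftSupport M b t := by
  obtain ⟨t, ht, hfix, hleast⟩ := exists_least_projection_fixing M
    (S := {y | ∃ x ∈ M.commutant, ∃ ξ, y = x (b ξ)}) (by
      rintro x hx _ ⟨x', hx', ξ, rfl⟩
      exact ⟨x * x', mul_mem hx hx', ξ, rfl⟩)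
  refine ⟨t, ht, ?_, fun r hr hrb => hleast r hr ?_⟩
  · ext ξ
    exact hfix _ ⟨1, one_mem _, ξ, rfl⟩
  · rintro _ ⟨x, hx, ξ, rfl⟩
    have hcomm : r * x = x * r := VonNeumannAlgebra.mem_commutant_iff.1 hx r hr.1
    exact (congrArg (fun T : H →L[ℂ] H => T (b ξ)) hcomm).trans
      (congrArg (fun T : H →L[ℂ] H => x (T ξ)) hrb)

/-- `V q H` is `M'`-invariant because `V` is a left `M'`-module. -/
lemma exists_isJoinOfLeftSupports {M : VonNeumannAlgebra H} {V : Set (H →L[ℂ] H)}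
    (hV : IsQRel M V) (q : H →L[ℂ] H) : ∃ s, IsJoinOfLeftSupports M V q s := by
  obtain ⟨s, hs, hfix, hleast⟩ := exists_least_projection_fixing M
    (S := {y | ∃ v ∈ V, ∃ ξ, y = v (q ξ)}) (by
      rintro x hx _ ⟨v, hv, ξ, rfl⟩
      exact ⟨x * v, hV.mul_mem_left hx hv, ξ, rfl⟩)
  refine ⟨s, hs, fun v hv => ?_, fun r hr hrV => hleast r hr ?_⟩
  · ext ξ
    exact hfix _ ⟨v, hv, ξ, rfl⟩
  · rintro _ ⟨v, hv, ξ, rfl⟩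
    exact congrArg (fun T : H →L[ℂ] H => T ξ) (hrV v hv)

lemma IsLeftSupport.mul_eq_self_iff {M : VonNeumannAlgebra H} {b t r : H →L[ℂ] H}
    (ht : IsLeftSupport M b t) (hr : IsProjectionIn M r) : r * t = t ↔ r * b = b :=
  ⟨fun hrt => by rw [← ht.2.1, ← mul_assoc, hrt], ht.2.2 r hr⟩

lemma forall_isLeftSupport_mul_eq_self_iff {M : VonNeumannAlgebra H} {b r : H →L[ℂ] H}
    (hr : IsProjectionIn M r) : (∀ t, IsLeftSupport M b t → r * t = t) ↔ r * b = b := by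
  obtain ⟨t, ht⟩ := exists_isLeftSupport M b
  exact ⟨fun h => (ht.mul_eq_self_iff hr).1 (h t ht), fun h t ht => (ht.mul_eq_self_iff hr).2 h⟩

lemma IsJoinOfLeftSupports.unique {M : VonNeumannAlgebra H} {V : Set (H →L[ℂ] H)}
    {q s s' : H →L[ℂ] H} (hs : IsJoinOfLeftSupports M V q s)
    (hs' : IsJoinOfLeftSupports M V q s') : s = s' :=
  calc s = s' * s := (hs.2.2 s' hs'.1 hs'.2.1).symm
    _ = star (s * s') := by rw [star_mul, hs.1.2.2.star_eq, hs'.1.2.2.star_eq]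
    _ = s' := by rw [hs'.2.2 s hs.1 hs.2.1, hs'.1.2.2.star_eq]

lemma IsJoinOfLeftSupports.forall_mul_mul_eq_zero_iff {M : VonNeumannAlgebra H}
    {V : Set (H →L[ℂ] H)} {p q s : H →L[ℂ] H} (hs : IsJoinOfLeftSupports M V q s)
    (hp : IsProjectionIn M p) : (∀ v ∈ V, p * v * q = 0) ↔ p * s = 0 := by
  constructor
  · intro hpV
    have h := hs.2.2 (1 - p) hp.one_sub fun v hv => by
      rw [one_sub_mul, ← mul_assoc, hpV v hv, sub_zero]
    rwa [one_sub_mul, sub_eq_self] at h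
  · intro hps v hv
    rw [mul_assoc, ← hs.2.1 v hv, ← mul_assoc, hps, zero_mul]

lemma mem_orcSet_iff {M : VonNeumannAlgebra H} {V : Set (H →L[ℂ] H)} (hV : IsQRel M V)
    {a : H →L[ℂ] H} :
    a ∈ orcSet M V ↔ ∀ q, IsProjectionIn M q →
      ∀ s, IsJoinOfLeftSupports M V q s → s * (a * q) = a * q := by
  constructor
  · intro ha q hq s hs
    have h := ha (1 - s) q hs.1.one_sub hq
      ((hs.forall_mul_mul_eq_zero_iff hs.1.one_sub).2 hs.1.2.1.one_sub_mul_self)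
    rwa [mul_assoc, one_sub_mul, sub_eq_zero, eq_comm] at h
  · intro ha p q hp hq hpV
    obtain ⟨s, hs⟩ := exists_isJoinOfLeftSupports hV q
    rw [mul_assoc, ← ha q hq s hs, ← mul_assoc, (hs.forall_mul_mul_eq_zero_iff hp).1 hpV,
      zero_mul]

lemma subset_orcSet (M : VonNeumannAlgebra H) (V : Set (H →L[ℂ] H)) : V ⊆ orcSet M V :=
  fun a ha _ _ _ _ hpV => hpV a ha

lemma mem_Vphi_iff {M : VonNeumannAlgebra H} {φ : (H →L[ℂ] H) → (H →L[ℂ] H)}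
    (hφ : ∀ q, IsProjectionIn M q → IsProjectionIn M (φ q)) {a : H →L[ℂ] H} :
    a ∈ Vphi M φ ↔ ∀ q, IsProjectionIn M q → φ q * (a * q) = a * q :=
  forall₂_congr fun q hq => forall_isLeftSupport_mul_eq_self_iff (hφ q hq)

lemma orcSet_Vphi {M : VonNeumannAlgebra H} {φ : (H →L[ℂ] H) → (H →L[ℂ] H)}
    (hφ : ∀ q, IsProjectionIn M q → IsProjectionIn M (φ q)) :
    orcSet M (Vphi M φ) = Vphi M φ := by
  refine (subset_orcSet M _).antisymm' fun a ha => (mem_Vphi_iff hφ).2 fun q hq => ?_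
  have h := ha (1 - φ q) q (hφ q hq).one_sub hq fun v hv => by
    rw [mul_assoc, one_sub_mul, (mem_Vphi_iff hφ).1 hv q hq, sub_self]
  rwa [mul_assoc, one_sub_mul, sub_eq_zero, eq_comm] at h

/-- For a quantum relation `V` on `M ⊆ B(H)`, `orc(V) = V_{φ_V}` where
`φ_V(q) = ⋁_{a ∈ V} s_ℓ^M(a q)`; consequently `V` is operator reflexive if and only if
`V = V_φ` for some map `φ : Proj(M) → Proj(M)`. -/
theorem statement1 (M : VonNeumannAlgebra H) (V : Set (H →L[ℂ] H)) (hV : IsQRel M V) :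
    (orcSet M V =
      {a : H →L[ℂ] H | ∀ q : H →L[ℂ] H, IsProjectionIn M q →
        ∀ s : H →L[ℂ] H, IsJoinOfLeftSupports M V q s →
          ∀ t : H →L[ℂ] H, IsLeftSupport M (a * q) t → s * t = t}) ∧
    (orcSet M V = V ↔
      ∃ φ : (H →L[ℂ] H) → (H →L[ℂ] H),
        (∀ q : H →L[ℂ] H, IsProjectionIn M q → IsProjectionIn M (φ q)) ∧
        V = Vphi M φ) := by
  refine ⟨Set.ext fun a => ?_, fun horc => ?_, ?_⟩
  · rw [mem_orcSet_iff hV]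
    exact forall₂_congr fun q _ => forall₂_congr fun s hs =>
      (forall_isLeftSupport_mul_eq_self_iff hs.1).symm
  · choose φ hφ using exists_isJoinOfLeftSupports hV
    refine ⟨φ, fun q _ => (hφ q).1, Set.ext fun a => ?_⟩
    rw [← horc, mem_orcSet_iff hV, mem_Vphi_iff fun q _ => (hφ q).1]
    exact forall₂_congr fun q _ =>
      ⟨fun h => h _ (hφ q), fun h s hs => (hφ q).unique hs ▸ h⟩
  · rintro ⟨φ, hφ, rfl⟩
    exact orcSet_Vphi hφ

end QCG
end
end

section
/- Partition ℕ into consecutive intervals (I_n)_{n≥1} with |I_n| = n, and let p ∈ B(ℓ²(ℕ)) be the orthogonal projection whose matrix has entry 1/n in every position of the block I_n × I_n and entry 0 elsewhere (so p = ⊕_n p_n, where p_n is the rank-one projection onto the constant vector in ℂⁿ). Let A ⊆ B(ℓ²(ℕ)) be the C*-algebra generated by p together with all diagonal operators ℓ∞(ℕ). Then A contains the diagonal ℓ∞(ℕ), but there is no coarse structure ℰ on ℕ with A = C*_u(ℕ, ℰ). -/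
open scoped ENNReal Classical

noncomputable section
set_option synthInstance.maxHeartbeats 1000000
set_option maxHeartbeats 1000000

namespace QCG

/-- A (classical) coarse structure on a set `X`. -/
structure IsCoarseStructure (X : Type*) (ℰ : Set (Set (X × X))) : Prop where
  diagonal_mem : {p : X × X | p.1 = p.2} ∈ ℰ
  subset_mem : ∀ E ∈ ℰ, ∀ F : Set (X × X), F ⊆ E → F ∈ ℰ
  inv_mem : ∀ E ∈ ℰ, {p : X × X | (p.2, p.1) ∈ E} ∈ ℰ
  union_mem : ∀ E ∈ ℰ, ∀ F ∈ ℰ, E ∪ F ∈ ℰ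
  comp_mem : ∀ E ∈ ℰ, ∀ F ∈ ℰ, {p : X × X | ∃ z : X, (p.1, z) ∈ E ∧ (z, p.2) ∈ F} ∈ ℰ

/-- `ℓ²(ℕ)`. -/
abbrev ltwo : Type := lp (fun _ : ℕ => ℂ) 2

/-- The standard unit vector `δ_n ∈ ℓ²(ℕ)`. -/
def delta (n : ℕ) : ltwo := lp.single 2 n 1

/-- The rank-one partial isometry `e_{xy}` with `e_{xy} δ_y = δ_x` and `e_{xy} δ_z = 0`
for `z ≠ y`. -/
def matUnit (x y : ℕ) : ltwo →L[ℂ] ltwo :=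
  (innerSL ℂ (delta y)).smulRight (delta x)

/-- `a` is controlled by the relation `E ⊆ ℕ × ℕ`:
`e_{xx} a e_{yy} = 0` whenever `(x, y) ∉ E`. -/
def ControlledBy (a : ltwo →L[ℂ] ltwo) (E : Set (ℕ × ℕ)) : Prop :=
  ∀ x y : ℕ, (x, y) ∉ E → matUnit x x * a * matUnit y y = 0

/-- The `n`-th interval `I_n` of the partition of `ℕ` into consecutive intervals with
`|I_n| = n` (`n ≥ 1`): `I_n = [n(n-1)/2, n(n+1)/2)`. -/
def Iset (n : ℕ) : Set ℕ := Set.Ico (n * (n - 1) / 2) (n * (n + 1) / 2)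

/-- The diagonal operators (`ℓ∞(ℕ)`): zero matrix entries off the diagonal. -/
def Diagonal : Set (ltwo →L[ℂ] ltwo) :=
  {a : ltwo →L[ℂ] ltwo | ∀ x y : ℕ, x ≠ y → matUnit x x * a * matUnit y y = 0}



/-- triangular numbers -/
def tfun (n : ℕ) : ℕ := n * (n + 1) / 2

lemma tfun_mono : Monotone tfun := fun a b h =>
  Nat.div_le_div_right (Nat.mul_le_mul h (by omega))

lemma lt_tfun_succ (m : ℕ) : m < tfun (m + 1) := by
  have : (m+1) * 2 ≤ (m+1) * (m+2) := Nat.mul_le_mul_left _ (by omega)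
  have h2 : m + 1 ≤ tfun (m+1) := by
    unfold tfun
    calc m + 1 = (m+1)*2/2 := by omega
    _ ≤ (m+1)*(m+1+1)/2 := Nat.div_le_div_right this
  omega

lemma blk_ex (m : ℕ) : ∃ n, m < tfun n := ⟨m + 1, lt_tfun_succ m⟩

/-- the index of the block containing `m` -/
def blk (m : ℕ) : ℕ := Nat.find (blk_ex m)

lemma blk_spec (m : ℕ) : m < tfun (blk m) := Nat.find_spec (blk_ex m)

lemma blk_min (m : ℕ) {k : ℕ} (h : k < blk m) : tfun k ≤ m := by
  have := Nat.find_min (blk_ex m) h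
  omega

lemma blk_pos (m : ℕ) : 1 ≤ blk m := by
  rcases Nat.eq_zero_or_pos (blk m) with h | h
  · exfalso; have := blk_spec m; rw [h] at this; simp [tfun] at this
  · exact h

lemma Iset_eq (n : ℕ) (hn : 1 ≤ n) : Iset n = Set.Ico (tfun (n-1)) (tfun n) := by
  have h1 : n * (n - 1) / 2 = tfun (n-1) := by
    unfold tfun
    rw [mul_comm]
    congr 2
    omega
  unfold Iset tfun
  rw [h1]
  rfl

lemma mem_Iset_blk (m : ℕ) : m ∈ Iset (blk m) := by
  rw [Iset_eq _ (blk_pos m)]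
  exact ⟨blk_min m (by have := blk_pos m; omega), blk_spec m⟩

lemma blk_eq {n m : ℕ} (hn : 1 ≤ n) (hm : m ∈ Iset n) : blk m = n := by
  rw [Iset_eq n hn] at hm
  obtain ⟨h1, h2⟩ := hm
  by_contra h
  rcases Nat.lt_or_ge (blk m) n with hlt | hge
  · have : blk m ≤ n - 1 := by omega
    have := tfun_mono this
    have := blk_spec m
    omega
  · have hgt : n < blk m := by omega
    have : tfun n ≤ m := blk_min m hgt
    omega

lemma mem_Iset_iff_blk {n m : ℕ} (hn : 1 ≤ n) : m ∈ Iset n ↔ blk m = n :=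
  ⟨fun h => blk_eq hn h, fun h => h ▸ mem_Iset_blk m⟩

/-- the block as a finset -/
def IFin (n : ℕ) : Finset ℕ := Finset.Ico (n * (n - 1) / 2) (n * (n + 1) / 2)

lemma mem_IFin_iff {n m : ℕ} : m ∈ IFin n ↔ m ∈ Iset n := by
  simp [IFin, Iset]

lemma IFin_card (n : ℕ) : (IFin n).card = n := by
  rw [IFin, Nat.card_Ico]
  rcases Nat.eq_zero_or_pos n with rfl | hn
  · simp
  · have h1 : n * (n+1) = n * (n-1) + n * 2 := by
      have : n - 1 + 2 = n + 1 := by omega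
      rw [← this]; ring
    rw [h1, Nat.add_mul_div_right _ _ (by norm_num : (0:ℕ) < 2)]
    omega



lemma delta_apply (x y : ℕ) : (delta x : ∀ _ : ℕ, ℂ) y = if y = x then 1 else 0 := by
  simp [delta, lp.single_apply, Pi.single_apply]

lemma inner_delta_left (x : ℕ) (f : ltwo) : (inner ℂ (delta x) f : ℂ) = f x := by
  simp [delta, lp.inner_single_left]

lemma inner_delta_delta (x y : ℕ) :
    (inner ℂ (delta x) (delta y) : ℂ) = if x = y then 1 else 0 := by
  rw [inner_delta_left, delta_apply]

lemma norm_delta (x : ℕ) : ‖delta x‖ = 1 := by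
  have h : (inner ℂ (delta x) (delta x) : ℂ) = 1 := by rw [inner_delta_delta]; simp
  have h3 : ‖delta x‖^2 = 1 := by
    rw [norm_sq_eq_re_inner (𝕜 := ℂ) (delta x), h]
    simp
  nlinarith [norm_nonneg (delta x)]

lemma matUnit_apply (x y : ℕ) (v : ltwo) : matUnit x y v = v y • delta x := by
  simp [matUnit, inner_delta_left]

def ent (a : ltwo →L[ℂ] ltwo) (x y : ℕ) : ℂ := inner (𝕜 := ℂ) (delta x) (a (delta y))

lemma apply_delta_coord (a : ltwo →L[ℂ] ltwo) (x y : ℕ) : (a (delta y)) x = ent a x y := by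
  rw [ent, inner_delta_left]

lemma matUnit_delta (x y z : ℕ) :
    matUnit x y (delta z) = (if y = z then (1:ℂ) else 0) • delta x := by
  rw [matUnit_apply, delta_apply]

lemma compress_eq (a : ltwo →L[ℂ] ltwo) (x y : ℕ) :
    matUnit x x * a * matUnit y y = ent a x y • matUnit x y := by
  refine ContinuousLinearMap.ext fun v => ?_
  simp only [ContinuousLinearMap.mul_apply, ContinuousLinearMap.smul_apply]
  calc matUnit x x (a (matUnit y y v))
      = matUnit x x (a (v y • delta y)) := by rw [matUnit_apply y y v]
    _ = v y • matUnit x x (a (delta y)) := by rw [map_smul, map_smul]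
    _ = v y • ((a (delta y)) x • delta x) := by
        rw [matUnit_apply x x (a (delta y))]
    _ = v y • (ent a x y • delta x) := by rw [apply_delta_coord]
    _ = ent a x y • (v y • delta x) := smul_comm _ _ _
    _ = ent a x y • matUnit x y v := by rw [matUnit_apply]

lemma matUnit_ne_zero (x y : ℕ) : matUnit x y ≠ 0 := by
  intro h
  have h1 : delta x = 0 := by
    have h0 := congrArg (fun T : ltwo →L[ℂ] ltwo => T (delta y)) h
    simp only [ContinuousLinearMap.zero_apply] at h0
    rw [matUnit_delta, if_pos rfl, one_smul] at h0
    exact h0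
  have h2 := congrArg (fun f : ltwo => (f : ∀ _ : ℕ, ℂ) x) h1
  simp only [delta_apply, if_pos rfl] at h2
  rw [lp.coeFn_zero] at h2
  simp at h2

lemma compress_eq_zero_iff (a : ltwo →L[ℂ] ltwo) (x y : ℕ) :
    matUnit x x * a * matUnit y y = 0 ↔ ent a x y = 0 := by
  rw [compress_eq, smul_eq_zero, or_iff_left (matUnit_ne_zero x y)]

lemma ent_norm_le (a : ltwo →L[ℂ] ltwo) (x y : ℕ) : ‖ent a x y‖ ≤ ‖a‖ := by
  have h1 : ‖ent a x y‖ ≤ ‖delta x‖ * ‖a (delta y)‖ := norm_inner_le_norm _ _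
  have h2 : ‖a (delta y)‖ ≤ ‖a‖ * ‖delta y‖ := a.le_opNorm _
  rw [norm_delta] at h1
  rw [norm_delta] at h2
  simpa using h1.trans (by simpa using h2)

lemma ent_add (a b : ltwo →L[ℂ] ltwo) (x y : ℕ) : ent (a + b) x y = ent a x y + ent b x y := by
  simp [ent, inner_add_right]

lemma ent_sub (a b : ltwo →L[ℂ] ltwo) (x y : ℕ) : ent (a - b) x y = ent a x y - ent b x y := by
  simp [ent, inner_sub_right]

lemma ent_smul (c : ℂ) (a : ltwo →L[ℂ] ltwo) (x y : ℕ) : ent (c • a) x y = c * ent a x y := by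
  simp [ent, inner_smul_right]

lemma ent_one (x y : ℕ) : ent (1 : ltwo →L[ℂ] ltwo) x y = if x = y then 1 else 0 := by
  simp [ent, inner_delta_delta]

lemma ent_star (a : ltwo →L[ℂ] ltwo) (x y : ℕ) :
    ent (star a) x y = starRingEnd ℂ (ent a y x) := by
  rw [ent, ent, ContinuousLinearMap.star_eq_adjoint, ContinuousLinearMap.adjoint_inner_right,
    ← inner_conj_symm]

lemma single_eq_smul_delta (z : ℕ) (c : ℂ) : lp.single 2 z c = c • delta z := by
  ext w
  rw [lp.single_apply]
  have : ((c • delta z : ltwo) : ∀ _ : ℕ, ℂ) w = c * (delta z : ∀ _ : ℕ, ℂ) w := by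
    rw [lp.coeFn_smul]; simp
  rw [this, delta_apply]
  by_cases h : w = z <;> simp [h]

lemma ent_mul (a b : ltwo →L[ℂ] ltwo) (x y : ℕ) :
    ent (a * b) x y = ∑' z, ent b z y * ent a x z := by
  have hsum : HasSum (fun z => lp.single 2 z ((b (delta y)) z)) (b (delta y)) :=
    lp.hasSum_single ENNReal.ofNat_ne_top _
  have h2 : HasSum (fun z => (inner ℂ (delta x) (a (lp.single 2 z ((b (delta y)) z))) : ℂ))
      (inner ℂ (delta x) (a (b (delta y)))) := by
    have := hsum.mapL ((innerSL ℂ (delta x)).comp a)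
    simpa using this
  have h3 : ∀ z, (inner ℂ (delta x) (a (lp.single 2 z ((b (delta y)) z))) : ℂ)
      = ent b z y * ent a x z := by
    intro z
    rw [single_eq_smul_delta, map_smul, inner_smul_right, apply_delta_coord]
    rfl
  rw [show ent (a * b) x y = (inner ℂ (delta x) (a (b (delta y))) : ℂ) from rfl]
  rw [← h2.tsum_eq]
  exact tsum_congr h3


-- ## The same-block support subalgebra

def Wcar : Set (ltwo →L[ℂ] ltwo) := {a | ∀ x y : ℕ, blk x ≠ blk y → ent a x y = 0}

lemma ent_lipschitz (x y : ℕ) :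
    LipschitzWith 1 (fun a : ltwo →L[ℂ] ltwo => ent a x y) := by
  apply LipschitzWith.of_dist_le_mul
  intro a b
  rw [dist_eq_norm, dist_eq_norm, NNReal.coe_one, one_mul, ← ent_sub]
  exact ent_norm_le _ _ _

lemma Wcar_closed : IsClosed Wcar := by
  have : Wcar = ⋂ (x : ℕ), ⋂ (y : ℕ), ⋂ (_ : blk x ≠ blk y),
      {a : ltwo →L[ℂ] ltwo | ent a x y = 0} := by
    ext a
    simp only [Wcar, Set.mem_iInter, Set.mem_setOf_eq]
  rw [this]
  refine isClosed_iInter fun x => isClosed_iInter fun y => isClosed_iInter fun h => ?_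
  exact isClosed_eq (ent_lipschitz x y).continuous continuous_const

def Wsub : StarSubalgebra ℂ (ltwo →L[ℂ] ltwo) where
  carrier := Wcar
  mul_mem' := by
    intro a b ha hb x y hxy
    rw [ent_mul]
    have : ∀ z : ℕ, ent b z y * ent a x z = 0 := by
      intro z
      by_cases hz : blk z = blk x
      · rw [hb z y (by rw [hz]; exact hxy), zero_mul]
      · rw [ha x z (fun h => hz h.symm), mul_zero]
    simp only [this]
    exact tsum_zero
  one_mem' := by
    intro x y hxy
    rw [ent_one, if_neg (fun h => hxy (by rw [h]))]
  add_mem' := by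
    intro a b ha hb x y hxy
    rw [ent_add, ha x y hxy, hb x y hxy, add_zero]
  zero_mem' := by
    intro x y _
    simp [ent]
  algebraMap_mem' := by
    intro c x y hxy
    rw [Algebra.algebraMap_eq_smul_one, ent_smul, ent_one,
      if_neg (fun h => hxy (by rw [h])), mul_zero]
  star_mem' := by
    intro a ha x y hxy
    rw [ent_star, ha y x (fun h => hxy h.symm), map_zero]

section WithP

variable {p : ltwo →L[ℂ] ltwo}
  (hp : ∀ n : ℕ, 1 ≤ n → ∀ i ∈ Iset n, ∀ j : ℕ,
      (inner ℂ (p (delta j)) (delta i) : ℂ) = if j ∈ Iset n then ((n : ℂ))⁻¹ else 0)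
include hp

lemma ent_p (x y : ℕ) :
    ent p x y = if blk x = blk y then ((blk x : ℂ))⁻¹ else 0 := by
  have h := hp (blk x) (blk_pos x) x (mem_Iset_blk x) y
  have h0 : ent p x y = starRingEnd ℂ (inner ℂ (p (delta y)) (delta x) : ℂ) := by
    rw [ent, ← inner_conj_symm]
  rw [h0, h]
  by_cases hxy : y ∈ Iset (blk x)
  · rw [if_pos hxy, if_pos (((mem_Iset_iff_blk (blk_pos x)).mp hxy).symm)]
    simp
  · rw [if_neg hxy, if_neg, map_zero]
    intro he
    exact hxy ((mem_Iset_iff_blk (blk_pos x)).mpr he.symm)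

lemma p_mem_Wcar : p ∈ Wcar := by
  intro x y hxy
  rw [ent_p hp, if_neg hxy]

omit hp

lemma Diagonal_subset_Wcar : Diagonal ⊆ Wcar := by
  intro a ha x y hxy
  have hne : x ≠ y := fun h => hxy (by rw [h])
  exact (compress_eq_zero_iff a x y).mp (ha x y hne)

include hp

lemma adjoin_le_Wsub : StarAlgebra.adjoin ℂ (insert p Diagonal) ≤ Wsub := by
  apply StarAlgebra.adjoin_le
  intro a ha
  rcases Set.mem_insert_iff.mp ha with rfl | ha
  · exact p_mem_Wcar hp
  · exact Diagonal_subset_Wcar ha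

lemma closure_le_Wsub :
    (StarAlgebra.adjoin ℂ (insert p Diagonal)).topologicalClosure ≤ Wsub :=
  StarSubalgebra.topologicalClosure_minimal (adjoin_le_Wsub hp) Wcar_closed

/-- the uniform off-diagonal decay property of elements of the generated star algebra -/
lemma bprop_adjoin {a : ltwo →L[ℂ] ltwo}
    (ha : a ∈ StarAlgebra.adjoin ℂ (insert p Diagonal)) :
    ∃ C : ℝ, 0 ≤ C ∧ ∀ n x y : ℕ, 1 ≤ n → x ∈ Iset n → y ∈ Iset n → x ≠ y →
      ‖ent a x y‖ ≤ C / n := by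
  induction ha using StarAlgebra.adjoin_induction with
  | mem z hz =>
    rcases Set.mem_insert_iff.mp hz with rfl | hz
    · refine ⟨1, zero_le_one, fun n x y hn hx hy hne => ?_⟩
      rw [ent_p hp, if_pos (by rw [blk_eq hn hx, blk_eq hn hy]), blk_eq hn hx]
      rw [norm_inv, Complex.norm_natCast]
      rw [one_div]
    · refine ⟨0, le_refl 0, fun n x y hn hx hy hne => ?_⟩
      rw [(compress_eq_zero_iff z x y).mp (hz x y hne), norm_zero]
      positivity
  | algebraMap r =>
    refine ⟨0, le_refl 0, fun n x y hn hx hy hne => ?_⟩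
    rw [Algebra.algebraMap_eq_smul_one, ent_smul, ent_one, if_neg hne, mul_zero, norm_zero]
    positivity
  | add u v hu hv ihu ihv =>
    obtain ⟨C1, hC1, h1⟩ := ihu
    obtain ⟨C2, hC2, h2⟩ := ihv
    refine ⟨C1 + C2, by positivity, fun n x y hn hx hy hne => ?_⟩
    rw [ent_add]
    calc ‖ent u x y + ent v x y‖ ≤ ‖ent u x y‖ + ‖ent v x y‖ := norm_add_le _ _
    _ ≤ C1 / n + C2 / n := add_le_add (h1 n x y hn hx hy hne) (h2 n x y hn hx hy hne)
    _ = (C1 + C2) / n := (add_div _ _ _).symm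
  | star u hu ihu =>
    obtain ⟨C, hC, h⟩ := ihu
    refine ⟨C, hC, fun n x y hn hx hy hne => ?_⟩
    rw [ent_star]
    rw [RCLike.norm_conj]
    exact h n y x hn hy hx (Ne.symm hne)
  | mul u v hu hv ihu ihv =>
    obtain ⟨C1, hC1, h1⟩ := ihu
    obtain ⟨C2, hC2, h2⟩ := ihv
    have huW : u ∈ Wcar := adjoin_le_Wsub hp hu
    refine ⟨‖u‖ * C2 + C1 * ‖v‖ + C1 * C2, by positivity, fun n x y hn hx hy hne => ?_⟩
    have hnR : (0:ℝ) < n := by exact_mod_cast hn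
    have hblkx : blk x = n := blk_eq hn hx
    rw [ent_mul]
    have hvanish : ∀ z ∉ IFin n, ent v z y * ent u x z = 0 := by
      intro z hz
      rw [mem_IFin_iff] at hz
      have hbz : blk x ≠ blk z := by
        rw [hblkx]
        intro h
        exact hz ((mem_Iset_iff_blk hn).mpr h.symm)
      rw [huW x z hbz, mul_zero]
    rw [tsum_eq_sum hvanish]
    have hterm : ∀ z ∈ IFin n, ‖ent v z y * ent u x z‖ ≤
        (if z = x then ‖u‖ * (C2 / n) else 0) + (if z = y then (C1 / n) * ‖v‖ else 0)
          + (C1 / n) * (C2 / n) := by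
      intro z hz
      rw [mem_IFin_iff] at hz
      rw [norm_mul]
      have hq1 : (0:ℝ) ≤ C1 / n := by positivity
      have hq2 : (0:ℝ) ≤ C2 / n := by positivity
      have hq3 : (0:ℝ) ≤ (C1 / n) * (C2 / n) := by positivity
      by_cases hzx : z = x
      · rw [if_pos hzx, if_neg (by rw [hzx]; exact hne)]
        have b1 : ‖ent v z y‖ ≤ C2 / n := h2 n z y hn hz hy (by rw [hzx]; exact hne)
        have b2 : ‖ent u x z‖ ≤ ‖u‖ := ent_norm_le u x z
        have := mul_le_mul b1 b2 (norm_nonneg _) hq2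
        nlinarith [norm_nonneg (ent v z y), norm_nonneg (ent u x z)]
      · by_cases hzy : z = y
        · rw [if_neg hzx, if_pos hzy]
          have b1 : ‖ent v z y‖ ≤ ‖v‖ := ent_norm_le v z y
          have b2 : ‖ent u x z‖ ≤ C1 / n := h1 n x z hn hx hz (fun h => hzx h.symm)
          have := mul_le_mul b1 b2 (norm_nonneg _) (norm_nonneg _)
          nlinarith [norm_nonneg (ent v z y), norm_nonneg (ent u x z)]
        · rw [if_neg hzx, if_neg hzy]
          have b1 : ‖ent v z y‖ ≤ C2 / n := h2 n z y hn hz hy hzy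
          have b2 : ‖ent u x z‖ ≤ C1 / n := h1 n x z hn hx hz (fun h => hzx h.symm)
          have := mul_le_mul b1 b2 (norm_nonneg _) hq2
          nlinarith [norm_nonneg (ent v z y), norm_nonneg (ent u x z)]
    calc ‖∑ z ∈ IFin n, ent v z y * ent u x z‖
        ≤ ∑ z ∈ IFin n, ‖ent v z y * ent u x z‖ := norm_sum_le _ _
      _ ≤ ∑ z ∈ IFin n, ((if z = x then ‖u‖ * (C2 / n) else 0)
            + (if z = y then (C1 / n) * ‖v‖ else 0) + (C1 / n) * (C2 / n)) :=
          Finset.sum_le_sum hterm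
      _ = (‖u‖ * (C2 / n)) + ((C1 / n) * ‖v‖) + (n : ℝ) * ((C1 / n) * (C2 / n)) := by
          rw [Finset.sum_add_distrib, Finset.sum_add_distrib,
            Finset.sum_ite_eq' (IFin n) x, Finset.sum_ite_eq' (IFin n) y,
            if_pos (mem_IFin_iff.mpr hx), if_pos (mem_IFin_iff.mpr hy),
            Finset.sum_const, IFin_card, nsmul_eq_mul]
      _ = (‖u‖ * C2 + C1 * ‖v‖ + C1 * C2) / n := by
          field_simp

omit hp in
lemma inner_blockvec (T : ltwo →L[ℂ] ltwo) (n : ℕ) :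
    (inner ℂ (∑ i ∈ IFin n, delta i) (T (∑ j ∈ IFin n, delta j)) : ℂ)
      = ∑ i ∈ IFin n, ∑ j ∈ IFin n, ent T i j := by
  rw [map_sum, sum_inner]
  refine Finset.sum_congr rfl fun i _ => ?_
  rw [inner_sum]
  exact Finset.sum_congr rfl fun j _ => rfl

omit hp in
lemma norm_sq_blockvec (n : ℕ) : ‖(∑ i ∈ IFin n, delta i : ltwo)‖ ^ 2 = (n : ℝ) := by
  have h1 : (inner ℂ (∑ i ∈ IFin n, delta i : ltwo) (∑ j ∈ IFin n, delta j) : ℂ) = (n : ℂ) := by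
    rw [sum_inner]
    have : ∀ i ∈ IFin n, (inner ℂ (delta i) (∑ j ∈ IFin n, delta j : ltwo) : ℂ) = 1 := by
      intro i hi
      rw [inner_sum]
      have : ∀ j ∈ IFin n, (inner ℂ (delta i) (delta j) : ℂ) = if i = j then 1 else 0 :=
        fun j _ => inner_delta_delta i j
      rw [Finset.sum_congr rfl this, Finset.sum_ite_eq (IFin n) i (fun _ => (1:ℂ)), if_pos hi]
    rw [Finset.sum_congr rfl this, Finset.sum_const, IFin_card, nsmul_eq_mul, mul_one]
  rw [norm_sq_eq_re_inner (𝕜 := ℂ), h1]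
  simp

lemma gamma_est (a : ltwo →L[ℂ] ltwo) {n : ℕ} (hn : 6 ≤ n)
    (hdiag : ∀ x y : ℕ, x ∈ Iset n → y ∈ Iset n → x ≠ y → ent a x y = 0) :
    (1:ℝ)/3 ≤ ‖p - a‖ := by
  have hn1 : 1 ≤ n := by omega
  have hnR : (0:ℝ) < n := by exact_mod_cast hn1
  have hnC : ((n:ℂ)) ≠ 0 := Nat.cast_ne_zero.mpr (by omega)
  by_cases hbig : ∃ j ∈ IFin n, (1:ℝ)/2 ≤ ‖ent a j j‖
  · obtain ⟨j, hj, hjb⟩ := hbig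
    rw [mem_IFin_iff] at hj
    have hd : ent p j j = ((n:ℂ))⁻¹ := by
      rw [ent_p hp, if_pos rfl, blk_eq hn1 hj]
    have h1 : ‖ent (p - a) j j‖ ≤ ‖p - a‖ := ent_norm_le _ _ _
    rw [ent_sub, hd] at h1
    have h2 : ‖ent a j j‖ - ‖((n:ℂ))⁻¹‖ ≤ ‖((n:ℂ))⁻¹ - ent a j j‖ := by
      have h := norm_sub_norm_le (ent a j j) (((n:ℂ))⁻¹)
      rw [norm_sub_rev] at h
      exact h
    have h3 : ‖((n:ℂ))⁻¹‖ = 1 / (n:ℝ) := by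
      rw [norm_inv, Complex.norm_natCast, one_div]
    have h4 : (1:ℝ)/(n:ℝ) ≤ 1/6 := by
      apply one_div_le_one_div_of_le
      · norm_num
      · exact_mod_cast hn
    rw [h3] at h2
    linarith
  · push_neg at hbig
    set u : ltwo := ∑ i ∈ IFin n, delta i with hu
    have hPu : (inner ℂ u ((p - a) u) : ℂ) = (n:ℂ) - ∑ j ∈ IFin n, ent a j j := by
      rw [hu, inner_blockvec]
      have hsplit : ∀ i ∈ IFin n, ∑ j ∈ IFin n, ent (p - a) i j
          = ∑ j ∈ IFin n, ent p i j - ∑ j ∈ IFin n, ent a i j := by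
        intro i _
        rw [← Finset.sum_sub_distrib]
        exact Finset.sum_congr rfl fun j _ => ent_sub p a i j
      rw [Finset.sum_congr rfl hsplit, Finset.sum_sub_distrib]
      have hP : ∑ i ∈ IFin n, ∑ j ∈ IFin n, ent p i j = (n:ℂ) := by
        have hval : ∀ i ∈ IFin n, ∀ j ∈ IFin n, ent p i j = ((n:ℂ))⁻¹ := by
          intro i hi j hj
          rw [mem_IFin_iff] at hi hj
          rw [ent_p hp, blk_eq hn1 hi, blk_eq hn1 hj, if_pos rfl]
        calc ∑ i ∈ IFin n, ∑ j ∈ IFin n, ent p i j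
            = ∑ _i ∈ IFin n, ∑ _j ∈ IFin n, ((n:ℂ))⁻¹ :=
              Finset.sum_congr rfl fun i hi => Finset.sum_congr rfl fun j hj => hval i hi j hj
          _ = (n:ℂ) * ((n:ℂ) * ((n:ℂ))⁻¹) := by
              rw [Finset.sum_const, IFin_card, nsmul_eq_mul, Finset.sum_const, IFin_card,
                nsmul_eq_mul]
          _ = (n:ℂ) := by rw [mul_inv_cancel₀ hnC, mul_one]
      have hA : ∑ i ∈ IFin n, ∑ j ∈ IFin n, ent a i j = ∑ j ∈ IFin n, ent a j j := by
        refine Finset.sum_congr rfl fun i hi => ?_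
        refine Finset.sum_eq_single i ?_ ?_
        · intro j hj hne
          rw [mem_IFin_iff] at hi hj
          exact hdiag i j hi hj (fun h => hne h.symm)
        · intro h
          exact absurd hi h
      rw [hP, hA]
    have hlow : (n:ℝ)/2 ≤ ‖(n:ℂ) - ∑ j ∈ IFin n, ent a j j‖ := by
      have h1 : ‖((n:ℂ))‖ - ‖∑ j ∈ IFin n, ent a j j‖ ≤ ‖(n:ℂ) - ∑ j ∈ IFin n, ent a j j‖ :=
        norm_sub_norm_le _ _
      have h2 : ‖∑ j ∈ IFin n, ent a j j‖ ≤ (n:ℝ) * (1/2) := by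
        calc ‖∑ j ∈ IFin n, ent a j j‖ ≤ ∑ j ∈ IFin n, ‖ent a j j‖ := norm_sum_le _ _
          _ ≤ ∑ _j ∈ IFin n, (1/2 : ℝ) :=
              Finset.sum_le_sum fun j hj => le_of_lt (hbig j hj)
          _ = (n:ℝ) * (1/2) := by rw [Finset.sum_const, IFin_card, nsmul_eq_mul]
      rw [Complex.norm_natCast] at h1
      linarith
    have hup : ‖(inner ℂ u ((p - a) u) : ℂ)‖ ≤ ‖p - a‖ * (n:ℝ) := by
      calc ‖(inner ℂ u ((p - a) u) : ℂ)‖ ≤ ‖u‖ * ‖(p - a) u‖ := norm_inner_le_norm _ _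
        _ ≤ ‖u‖ * (‖p - a‖ * ‖u‖) := by
            refine mul_le_mul_of_nonneg_left ((p - a).le_opNorm u) (norm_nonneg _)
        _ = ‖p - a‖ * (‖u‖ ^ 2) := by ring
        _ = ‖p - a‖ * (n:ℝ) := by rw [hu, norm_sq_blockvec]
    rw [hPu] at hup
    have : (n:ℝ)/2 ≤ ‖p - a‖ * (n:ℝ) := le_trans hlow hup
    have h12 : (1:ℝ)/2 ≤ ‖p - a‖ := by
      by_contra hc
      push_neg at hc
      nlinarith
    linarith

end WithP

-- ## Construction of the partial-translation operator supported on chosen pairs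

section BadOp

variable (S : Set ℕ) (sel : ℕ → ℕ × ℕ)
  (hsel1 : ∀ n ∈ S, (sel n).1 ∈ Iset n) (hsel2 : ∀ n ∈ S, (sel n).2 ∈ Iset n)
  (hS1 : ∀ n ∈ S, 1 ≤ n)

def chi (k : ℕ) : Prop := blk k ∈ S ∧ k = (sel (blk k)).1

def tau (k : ℕ) : ℕ := (sel (blk k)).2

include hsel1 hsel2 hS1 in
lemma tau_injOn : ∀ k₁ k₂ : ℕ, chi S sel k₁ → chi S sel k₂ →
    tau sel k₁ = tau sel k₂ → k₁ = k₂ := by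
  intro k₁ k₂ h₁ h₂ he
  have hb1 : blk (tau sel k₁) = blk k₁ :=
    blk_eq (hS1 _ h₁.1) (hsel2 _ h₁.1)
  have hb2 : blk (tau sel k₂) = blk k₂ :=
    blk_eq (hS1 _ h₂.1) (hsel2 _ h₂.1)
  have hbb : blk k₁ = blk k₂ := by rw [← hb1, ← hb2, he]
  rw [h₁.2, h₂.2, hbb]

def bfun (v : ltwo) : ∀ _ : ℕ, ℂ := fun k => if chi S sel k then v (tau sel k) else 0

include hsel1 hsel2 hS1

lemma bfun_sq_summable (v : ltwo) :
    Summable (fun k => ‖bfun S sel v k‖ ^ (2:ℝ)) ∧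
      ∑' k, ‖bfun S sel v k‖ ^ (2:ℝ) ≤ ∑' i, ‖v i‖ ^ (2:ℝ) := by
  have hv : Summable (fun i => ‖v i‖ ^ (2:ℝ)) := by
    have h := (lp.memℓp v).summable (p := 2) (by norm_num)
    have e : ((2:ℝ≥0∞)).toReal = (2:ℝ) := by norm_num
    rw [e] at h
    exact h
  have hind : (fun k => ‖bfun S sel v k‖ ^ (2:ℝ))
      = Set.indicator {k | chi S sel k} (fun k => ‖v (tau sel k)‖ ^ (2:ℝ)) := by
    funext k
    simp only [Set.indicator_apply, Set.mem_setOf_eq, bfun]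
    by_cases h : chi S sel k
    · rw [if_pos h, if_pos h]
    · rw [if_neg h, if_neg h, norm_zero, Real.zero_rpow (by norm_num)]
  have hinj : Function.Injective
      (fun k : {k : ℕ // chi S sel k} => tau sel k.1) := by
    intro k₁ k₂ h
    exact Subtype.ext (tau_injOn S sel hsel1 hsel2 hS1 k₁.1 k₂.1 k₁.2 k₂.2 h)
  have hsub : Summable ((fun k => ‖v (tau sel k)‖ ^ (2:ℝ)) ∘
      ((↑) : {k : ℕ // chi S sel k} → ℕ)) := by
    have : ((fun k => ‖v (tau sel k)‖ ^ (2:ℝ)) ∘ ((↑) : {k : ℕ // chi S sel k} → ℕ))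
        = (fun i => ‖v i‖ ^ (2:ℝ)) ∘ (fun k : {k : ℕ // chi S sel k} => tau sel k.1) := rfl
    rw [this]
    exact hv.comp_injective hinj
  have hsummable : Summable (fun k => ‖bfun S sel v k‖ ^ (2:ℝ)) := by
    rw [hind]
    exact summable_subtype_iff_indicator.mp hsub
  refine ⟨hsummable, ?_⟩
  rw [hind, ← tsum_subtype]
  exact Summable.tsum_le_tsum_of_inj (fun k : {k : ℕ // chi S sel k} => tau sel k.1) hinj
    (fun c _ => by positivity) (fun k => le_refl _) hsub hv

lemma bfun_memℓp (v : ltwo) : Memℓp (bfun S sel v) 2 := by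
  apply memℓp_gen
  have h := (bfun_sq_summable S sel hsel1 hsel2 hS1 v).1
  have e : ((2:ℝ≥0∞)).toReal = (2:ℝ) := by norm_num
  rw [e]
  exact h

def bopAux : ltwo →ₗ[ℂ] ltwo where
  toFun v := ⟨bfun S sel v, bfun_memℓp S sel hsel1 hsel2 hS1 v⟩
  map_add' v w := by
    apply Subtype.ext
    funext k
    show bfun S sel (v + w) k = bfun S sel v k + bfun S sel w k
    unfold bfun
    by_cases h : chi S sel k
    · rw [if_pos h, if_pos h, if_pos h, lp.coeFn_add]
      rfl
    · rw [if_neg h, if_neg h, if_neg h, add_zero]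
  map_smul' c v := by
    apply Subtype.ext
    funext k
    show bfun S sel (c • v) k = c * bfun S sel v k
    unfold bfun
    by_cases h : chi S sel k
    · rw [if_pos h, if_pos h, lp.coeFn_smul]
      rfl
    · rw [if_neg h, if_neg h, mul_zero]

lemma bopAux_norm (v : ltwo) : ‖bopAux S sel hsel1 hsel2 hS1 v‖ ≤ 1 * ‖v‖ := by
  rw [one_mul]
  have h2 : (0:ℝ) < (2:ℝ≥0∞).toReal := by norm_num
  have hb := lp.norm_rpow_eq_tsum h2 (bopAux S sel hsel1 hsel2 hS1 v)
  have hv := lp.norm_rpow_eq_tsum h2 v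
  have htR : (2:ℝ≥0∞).toReal = (2:ℝ) := by norm_num
  rw [htR] at hb hv
  have hcoe : ∀ k, ((bopAux S sel hsel1 hsel2 hS1 v) : ∀ _ : ℕ, ℂ) k = bfun S sel v k :=
    fun _ => rfl
  have hble : ‖bopAux S sel hsel1 hsel2 hS1 v‖ ^ (2:ℝ) ≤ ‖v‖ ^ (2:ℝ) := by
    rw [hb, hv]
    have := (bfun_sq_summable S sel hsel1 hsel2 hS1 v).2
    calc ∑' k, ‖((bopAux S sel hsel1 hsel2 hS1 v) : ∀ _ : ℕ, ℂ) k‖ ^ (2:ℝ)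
        = ∑' k, ‖bfun S sel v k‖ ^ (2:ℝ) := by
          refine tsum_congr fun k => by rw [hcoe]
      _ ≤ ∑' i, ‖v i‖ ^ (2:ℝ) := this
  by_contra hc
  push_neg at hc
  have := Real.rpow_lt_rpow (norm_nonneg v) hc (by norm_num : (0:ℝ) < 2)
  linarith

def bop : ltwo →L[ℂ] ltwo :=
  LinearMap.mkContinuous (bopAux S sel hsel1 hsel2 hS1) 1
    (bopAux_norm S sel hsel1 hsel2 hS1)

lemma ent_bop (u w : ℕ) :
    ent (bop S sel hsel1 hsel2 hS1) u w
      = if chi S sel u ∧ tau sel u = w then 1 else 0 := by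
  rw [← apply_delta_coord]
  have hcoe : ((bop S sel hsel1 hsel2 hS1 (delta w)) : ∀ _ : ℕ, ℂ) u
      = bfun S sel (delta w) u := rfl
  rw [hcoe]
  unfold bfun
  by_cases h : chi S sel u
  · rw [if_pos h, delta_apply]
    by_cases h2 : tau sel u = w
    · rw [if_pos h2, if_pos ⟨h, h2⟩]
    · rw [if_neg h2, if_neg (fun hh => h2 hh.2)]
  · rw [if_neg h, if_neg (fun hh => h hh.1)]

end BadOp

/-- Let `p` be the block-diagonal ghost projection with entry `1/n` in every position of
the block `I_n × I_n` and `0` elsewhere, and let `A` be the C*-algebra generated by `p`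
together with the diagonal `ℓ∞(ℕ)`.  Then `A` contains `ℓ∞(ℕ)`, but `A` is not the
uniform Roe algebra of any coarse structure on `ℕ`. -/
theorem statement7 (p : ltwo →L[ℂ] ltwo)
    (hp : ∀ n : ℕ, 1 ≤ n → ∀ i ∈ Iset n, ∀ j : ℕ,
      (inner ℂ (p (delta j)) (delta i) : ℂ) = if j ∈ Iset n then ((n : ℂ))⁻¹ else 0) :
    Diagonal ⊆ ((StarAlgebra.adjoin ℂ (insert p Diagonal)).topologicalClosure :
        Set (ltwo →L[ℂ] ltwo)) ∧
    ¬ ∃ ℰ : Set (Set (ℕ × ℕ)), IsCoarseStructure ℕ ℰ ∧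
        ((StarAlgebra.adjoin ℂ (insert p Diagonal)).topologicalClosure :
          Set (ltwo →L[ℂ] ltwo)) =
          closure {a : ltwo →L[ℂ] ltwo | ∃ E ∈ ℰ, ControlledBy a E} := by
  classical
  set AA := StarAlgebra.adjoin ℂ (insert p Diagonal) with hAA
  constructor
  · intro a ha
    exact AA.le_topologicalClosure (StarAlgebra.subset_adjoin ℂ _ (Set.mem_insert_of_mem p ha))
  · rintro ⟨ℰ, _hcs, heq⟩
    have hpA : p ∈ (AA.topologicalClosure : Set (ltwo →L[ℂ] ltwo)) :=
      AA.le_topologicalClosure (StarAlgebra.subset_adjoin ℂ _ (Set.mem_insert p Diagonal))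
    by_cases hcase : ∃ E ∈ ℰ, {n : ℕ | 1 ≤ n ∧ ∃ x y : ℕ,
        x ∈ Iset n ∧ y ∈ Iset n ∧ x ≠ y ∧ (x, y) ∈ E}.Infinite
    · obtain ⟨E, hE, hinf⟩ := hcase
      set S := {n : ℕ | 1 ≤ n ∧ ∃ x y : ℕ, x ∈ Iset n ∧ y ∈ Iset n ∧ x ≠ y ∧ (x, y) ∈ E}
        with hS
      have hsel0 : ∀ n : ℕ, ∃ q : ℕ × ℕ, n ∈ S →
          q.1 ∈ Iset n ∧ q.2 ∈ Iset n ∧ q.1 ≠ q.2 ∧ (q.1, q.2) ∈ E := by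
        intro n
        by_cases h : n ∈ S
        · obtain ⟨-, x, y, hx, hy, hne, hmem⟩ := h
          exact ⟨(x, y), fun _ => ⟨hx, hy, hne, hmem⟩⟩
        · exact ⟨(0, 0), fun hn => absurd hn h⟩
      choose sel hsel using hsel0
      have hsel1 : ∀ n ∈ S, (sel n).1 ∈ Iset n := fun n hn => (hsel n hn).1
      have hsel2 : ∀ n ∈ S, (sel n).2 ∈ Iset n := fun n hn => (hsel n hn).2.1
      have hS1 : ∀ n ∈ S, 1 ≤ n := fun n hn => hn.1
      set b := bop S sel hsel1 hsel2 hS1 with hb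
      have hctl : ControlledBy b E := by
        intro x y hxy
        rw [compress_eq_zero_iff, hb, ent_bop, if_neg]
        rintro ⟨hchi, htau⟩
        obtain ⟨hmemS, hxeq⟩ := hchi
        apply hxy
        have h2 : y = (sel (blk x)).2 := htau.symm
        have hmem := (hsel (blk x) hmemS).2.2.2
        rw [hxeq, h2]
        exact hmem
      have hbA' : b ∈ closure (AA : Set (ltwo →L[ℂ] ltwo)) := by
        rw [← StarSubalgebra.topologicalClosure_coe, heq]
        exact subset_closure ⟨E, hE, hctl⟩
      obtain ⟨a, haA, hdist⟩ := Metric.mem_closure_iff.mp hbA' (1/2) (by norm_num)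
      obtain ⟨C, hC0, hCb⟩ := bprop_adjoin hp haA
      obtain ⟨N, hN⟩ := exists_nat_gt (2 * C)
      obtain ⟨n, hnS, hnN⟩ := hinf.exists_gt N
      have hn1 : 1 ≤ n := hS1 n hnS
      have hblkx : blk ((sel n).1) = n := blk_eq hn1 (hsel1 n hnS)
      have hent1 : ent b ((sel n).1) ((sel n).2) = 1 := by
        rw [hb, ent_bop, if_pos]
        refine ⟨⟨?_, ?_⟩, ?_⟩
        · rw [hblkx]; exact hnS
        · rw [hblkx]
        · show (sel (blk ((sel n).1))).2 = (sel n).2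
          rw [hblkx]
      have hanorm : ‖ent a ((sel n).1) ((sel n).2)‖ ≤ C / n :=
        hCb n _ _ hn1 (hsel1 n hnS) (hsel2 n hnS) ((hsel n hnS).2.2.1)
      have h1 : ‖ent (b - a) ((sel n).1) ((sel n).2)‖ ≤ ‖b - a‖ := ent_norm_le _ _ _
      rw [ent_sub, hent1] at h1
      have h2 : 1 - C / n ≤ ‖(1:ℂ) - ent a ((sel n).1) ((sel n).2)‖ := by
        have h3 := norm_sub_norm_le (1:ℂ) (ent a ((sel n).1) ((sel n).2))
        rw [norm_one] at h3
        linarith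
      have hnpos : (0:ℝ) < n := by
        exact_mod_cast Nat.lt_of_lt_of_le Nat.zero_lt_one hn1
      have hNn : (N:ℝ) < n := by exact_mod_cast hnN
      have hCn : C / n < 1 / 2 := by
        rw [div_lt_iff₀ hnpos]
        nlinarith
      have hdist' : ‖b - a‖ < 1/2 := by rw [← dist_eq_norm]; exact hdist
      linarith
    · push_neg at hcase
      have hpcl : p ∈ closure {a : ltwo →L[ℂ] ltwo | ∃ E ∈ ℰ, ControlledBy a E} := by
        rw [← heq]
        exact hpA
      obtain ⟨a, hactl, hdist⟩ := Metric.mem_closure_iff.mp hpcl (1/3) (by norm_num)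
      obtain ⟨E, hE, hactl⟩ := hactl
      have hfin : Set.Finite {n : ℕ | 1 ≤ n ∧ ∃ x y : ℕ,
          x ∈ Iset n ∧ y ∈ Iset n ∧ x ≠ y ∧ (x, y) ∈ E} :=
        hcase E hE
      obtain ⟨n, hn⟩ := (hfin.union (Set.finite_Iio 6)).infinite_compl.nonempty
      rw [Set.mem_compl_iff, Set.mem_union] at hn
      push_neg at hn
      obtain ⟨hnQ, hn6⟩ := hn
      rw [Set.mem_Iio, not_lt] at hn6
      have hdiag : ∀ x y : ℕ, x ∈ Iset n → y ∈ Iset n → x ≠ y → ent a x y = 0 := by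
        intro x y hx hy hne
        rw [← compress_eq_zero_iff]
        apply hactl
        intro hmem
        exact hnQ ⟨by omega, x, y, hx, hy, hne, hmem⟩
      have hge := gamma_est hp a hn6 hdiag
      rw [dist_eq_norm] at hdist
      linarith

end QCG
end
end
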